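/- Let f : U → ℝ be a smooth positive function on an open subset U of ℂⁿ and c > 0 a constant. Then at every point of U, the Hermitian form i∂∂̄ log(f + c) − (f/(f+c)) · i∂∂̄ log f is positive semidefinite. -/

import Mathlib

open scoped ComplexConjugate

/-- The complex Hessian `i∂∂̄ g` of a real-valued function `g` on `ℂⁿ`, evaluated on the
complex direction `v` (i.e. the quadratic form `(i∂∂̄ g)(v, v̄)`): it equals one quarter of
the Laplacian of `g` along the complex line spanned by `v`. -/
noncomputable def ddbarQuad (n : ℕ) (g : EuclideanSpace ℂ (Fin n) → ℝ)
    (z v : EuclideanSpace ℂ (Fin n)) : ℝ :=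
  (1 / 4) * (iteratedFDeriv ℝ 2 g z ![v, v] +
    iteratedFDeriv ℝ 2 g z ![Complex.I • v, Complex.I • v])

/-- Second derivative of a composition `φ ∘ f` with `φ : ℝ → ℝ`. -/
lemma ddbar_comp_aux (n : ℕ) (f : EuclideanSpace ℂ (Fin n) → ℝ)
    (s : Set (EuclideanSpace ℂ (Fin n))) (hs : IsOpen s)
    (hf : ContDiffOn ℝ (⊤ : ℕ∞) f s) (φ φ' : ℝ → ℝ) (q : ℝ)
    (z : EuclideanSpace ℂ (Fin n)) (hz : z ∈ s)
    (hφ : ∀ x ∈ s, HasDerivAt φ (φ' (f x)) (f x))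
    (hφ' : HasDerivAt φ' q (f z)) (v w : EuclideanSpace ℂ (Fin n)) :
    iteratedFDeriv ℝ 2 (fun x => φ (f x)) z ![v, w] =
      q * (fderiv ℝ f z v * fderiv ℝ f z w) +
        φ' (f z) * (fderiv ℝ (fderiv ℝ f) z v w) := by
  have hdiff : ∀ x ∈ s, HasFDerivAt f (fderiv ℝ f x) x := fun x hx =>
    ((hf.contDiffAt (hs.mem_nhds hx)).differentiableAt (by simp)).hasFDerivAt
  have hG : ∀ x ∈ s, HasFDerivAt (fun y => φ (f y)) (φ' (f x) • fderiv ℝ f x) x := fun x hx =>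
    (hφ x hx).comp_hasFDerivAt x (hdiff x hx)
  have heq : fderiv ℝ (fun y => φ (f y)) =ᶠ[nhds z]
      fun x => φ' (f x) • fderiv ℝ f x := by
    filter_upwards [hs.mem_nhds hz] with x hx using (hG x hx).fderiv
  have h1 : HasFDerivAt (fun x => φ' (f x)) (q • fderiv ℝ f z) z :=
    hφ'.comp_hasFDerivAt z (hdiff z hz)
  have h2 : HasFDerivAt (fderiv ℝ f) (fderiv ℝ (fderiv ℝ f) z) z := by
    have : ContDiffAt ℝ 1 (fderiv ℝ f) z :=
      (hf.contDiffAt (hs.mem_nhds hz)).fderiv_right (WithTop.coe_le_coe.mpr le_top)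
    exact (this.differentiableAt (by simp)).hasFDerivAt
  have h3 := h1.smul h2
  have hfd : fderiv ℝ (fderiv ℝ (fun y => φ (f y))) z =
      φ' (f z) • fderiv ℝ (fderiv ℝ f) z + (q • fderiv ℝ f z).smulRight (fderiv ℝ f z) := by
    rw [heq.fderiv_eq]
    exact h3.fderiv
  rw [iteratedFDeriv_two_apply, hfd]
  simp [ContinuousLinearMap.add_apply, ContinuousLinearMap.smul_apply,
    ContinuousLinearMap.smulRight_apply]
  ring

/-- Let `f` be a smooth positive function on an open set `U ⊆ ℂⁿ` and `c > 0`. Then at every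
point of `U` the Hermitian form `i∂∂̄ log(f + c) − (f/(f+c)) · i∂∂̄ log f` is positive
semidefinite. -/
theorem ddbar_log_shift_psd (n : ℕ) (U : Set (EuclideanSpace ℂ (Fin n)))
    (hU : IsOpen U) (f : EuclideanSpace ℂ (Fin n) → ℝ) (hf : ContDiffOn ℝ (⊤ : ℕ∞) f U)
    (hfpos : ∀ z ∈ U, 0 < f z) (c : ℝ) (hc : 0 < c) :
    ∀ z ∈ U, ∀ v : EuclideanSpace ℂ (Fin n),
      0 ≤ ddbarQuad n (fun w => Real.log (f w + c)) z v -
        (f z / (f z + c)) * ddbarQuad n (fun w => Real.log (f w)) z v := by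
  intro z hz v
  have hA : 0 < f z := hfpos z hz
  have hB : 0 < f z + c := by linarith
  -- first composition : log (x + c)
  have hφ1 : ∀ x ∈ U, HasDerivAt (fun y => Real.log (y + c)) ((f x + c)⁻¹) (f x) := by
    intro x hx
    have hne : f x + c ≠ 0 := by have := hfpos x hx; positivity
    have := (Real.hasDerivAt_log hne).comp (f x) ((hasDerivAt_id (f x)).add_const c)
    simpa [Function.comp_def] using this
  have hφ1' : HasDerivAt (fun y : ℝ => (y + c)⁻¹) (-1 / (f z + c) ^ 2) (f z) := by
    have := ((hasDerivAt_id (f z)).add_const c).inv hB.ne'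
    simpa [Pi.inv_def] using this
  have hφ2 : ∀ x ∈ U, HasDerivAt (fun y => Real.log y) ((f x)⁻¹) (f x) := fun x hx =>
    Real.hasDerivAt_log (hfpos x hx).ne'
  have hφ2' : HasDerivAt (fun y : ℝ => y⁻¹) (-((f z) ^ 2)⁻¹) (f z) := hasDerivAt_inv hA.ne'
  have E1v := ddbar_comp_aux n f U hU hf _ _ _ z hz hφ1 hφ1' v v
  have E1w := ddbar_comp_aux n f U hU hf _ _ _ z hz hφ1 hφ1' (Complex.I • v) (Complex.I • v)
  have E2v := ddbar_comp_aux n f U hU hf _ _ _ z hz hφ2 hφ2' v v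
  have E2w := ddbar_comp_aux n f U hU hf _ _ _ z hz hφ2 hφ2' (Complex.I • v) (Complex.I • v)
  set a := fderiv ℝ f z v with ha
  set b := fderiv ℝ f z (Complex.I • v) with hb
  set h1 := fderiv ℝ (fderiv ℝ f) z v v with hh1
  set h2 := fderiv ℝ (fderiv ℝ f) z (Complex.I • v) (Complex.I • v) with hh2
  rw [ddbarQuad, ddbarQuad, E1v, E1w, E2v, E2w]
  have key : (1 / 4 : ℝ) * ((-1 / (f z + c) ^ 2) * (a * a) + (f z + c)⁻¹ * h1 +
        ((-1 / (f z + c) ^ 2) * (b * b) + (f z + c)⁻¹ * h2)) -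
      f z / (f z + c) * ((1 / 4) * ((-((f z) ^ 2)⁻¹) * (a * a) + (f z)⁻¹ * h1 +
        ((-((f z) ^ 2)⁻¹) * (b * b) + (f z)⁻¹ * h2))) =
      c * (a ^ 2 + b ^ 2) / (4 * (f z * (f z + c) ^ 2)) := by
    field_simp
    ring
  rw [key]
  positivity
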